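/- Let m ≥ 1 and k₁,…,k_m ≥ 1 be integers, N ≥ k + m with k := k₁+⋯+k_m, and τ₁,…,τ_m > 0. Define φ_i(t) := (1/(k_i+1))·(1 − (τ_i/t)^{k_i+1}) for t > 0, and χ(y¹,…,y^m,z) := (φ₁(|y¹|)y¹, …, φ_m(|y^m|)y^m, z) for y^i ∈ ℝ^{k_i+1}∖{0} and z ∈ ℝ^{N−k−m}. Then for every such point (y¹,…,y^m,z) and every ξ ∈ ℝ^N, ⟨dχ(y¹,…,y^m,z)[ξ], ξ⟩ ≤ max{1 − k₁φ₁(|y¹|), …, 1 − k_mφ_m(|y^m|), 1}·|ξ|², where dχ denotes the (total) derivative of χ and ⟨·,·⟩ the Euclidean inner product. -/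

import Mathlib

/-!
Each block of `χ` is a radial field `v ↦ g ‖v‖ • v`, whose derivative at `y ≠ 0` is
`g ‖y‖ • id + (g' ‖y‖ / ‖y‖) ⟪y, ·⟫ y`. When `g' ≥ 0`, Cauchy–Schwarz bounds its quadratic form
by `(g t + t g' t) ‖ξ‖²` with `t = ‖y‖`, and for `g = φᵢ` one computes
`g t + t g' t = (1 + kᵢ (τᵢ / t) ^ (kᵢ + 1)) / (kᵢ + 1) = 1 - kᵢ φᵢ t`.
Since `dχ` acts block by block (as the identity on the last block) and the blocks are orthogonal,
the quadratic form of `dχ` is the sum of the blockwise ones.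
-/

open RealInnerProductSpace

/-- The i-th block `y^i ∈ ℝ^{k_i+1}` of a point of
`ℝ^N = ℝ^{k₁+1} × ⋯ × ℝ^{k_m+1} × ℝ^{N-k-m}`. -/
def blockOf {m : ℕ} {k : Fin m → ℕ} {d : ℕ}
    (x : EuclideanSpace ℝ ((Σ i : Fin m, Fin (k i + 1)) ⊕ Fin d)) (i : Fin m) :
    EuclideanSpace ℝ (Fin (k i + 1)) :=
  WithLp.toLp 2 (fun a => x (Sum.inl ⟨i, a⟩))

/-- The vector field χ(y¹,…,y^m,z) = (φ₁(|y¹|)y¹,…,φ_m(|y^m|)y^m, z), where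
φ_i(t) = (1/(k_i+1))(1 − (τ_i/t)^{k_i+1}). -/
noncomputable def chiField {m : ℕ} {k : Fin m → ℕ} {d : ℕ} (τ : Fin m → ℝ)
    (x : EuclideanSpace ℝ ((Σ i : Fin m, Fin (k i + 1)) ⊕ Fin d)) :
    EuclideanSpace ℝ ((Σ i : Fin m, Fin (k i + 1)) ⊕ Fin d) :=
  WithLp.toLp 2 (fun j => Sum.elim
    (fun p : Σ i : Fin m, Fin (k i + 1) =>
      ((1 / ((k p.1 : ℝ) + 1)) * (1 - (τ p.1 / ‖blockOf x p.1‖) ^ (k p.1 + 1))) * x (Sum.inl p))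
    (fun j' => x (Sum.inr j')) j)

section Radial

variable {F : Type*} [NormedAddCommGroup F] [InnerProductSpace ℝ F]

theorem hasFDerivAt_norm_of_ne_zero {y : F} (hy : y ≠ 0) :
    HasFDerivAt (‖·‖) (‖y‖⁻¹ • innerSL ℝ y) y := by
  have h := (hasStrictFDerivAt_norm_sq y).hasFDerivAt.sqrt (by positivity)
  simp only [Real.sqrt_sq (norm_nonneg _)] at h
  convert h using 1
  ext v
  simp [field]

theorem hasFDerivAt_smul_norm_self {g : ℝ → ℝ} {g' : ℝ} {y : F} (hy : y ≠ 0)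
    (hg : HasDerivAt g g' ‖y‖) :
    HasFDerivAt (fun v => g ‖v‖ • v)
      (g ‖y‖ • ContinuousLinearMap.id ℝ F + (g' • ‖y‖⁻¹ • innerSL ℝ y).smulRight y) y :=
  (hg.comp_hasFDerivAt y (hasFDerivAt_norm_of_ne_zero hy)).smul (hasFDerivAt_id y)

theorem inner_fderiv_smul_norm_self_le {g : ℝ → ℝ} {g' : ℝ} {y : F} (hy : y ≠ 0)
    (hg : HasDerivAt g g' ‖y‖) (hg' : 0 ≤ g') (ξ : F) :
    ⟪fderiv ℝ (fun v => g ‖v‖ • v) y ξ, ξ⟫ ≤ (g ‖y‖ + ‖y‖ * g') * ‖ξ‖ ^ 2 := by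
  have hy' : 0 < ‖y‖ := norm_pos_iff.2 hy
  have hcs : ⟪y, ξ⟫ ^ 2 ≤ ‖y‖ ^ 2 * ‖ξ‖ ^ 2 := by
    simpa only [sq_abs, mul_pow] using
      pow_le_pow_left₀ (abs_nonneg _) (abs_real_inner_le_norm y ξ) 2
  rw [(hasFDerivAt_smul_norm_self hy hg).fderiv]
  simp only [_root_.add_apply, _root_.smul_apply, ContinuousLinearMap.id_apply,
    ContinuousLinearMap.smulRight_apply, innerSL_apply_apply, inner_add_left, inner_smul_left,
    real_inner_self_eq_norm_sq, smul_eq_mul, RCLike.conj_to_real]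
  have hradial : g' * (‖y‖⁻¹ * ⟪y, ξ⟫) * ⟪y, ξ⟫ ≤ ‖y‖ * g' * ‖ξ‖ ^ 2 :=
    calc g' * (‖y‖⁻¹ * ⟪y, ξ⟫) * ⟪y, ξ⟫ = g' * ‖y‖⁻¹ * ⟪y, ξ⟫ ^ 2 := by ring
      _ ≤ g' * ‖y‖⁻¹ * (‖y‖ ^ 2 * ‖ξ‖ ^ 2) := by gcongr
      _ = ‖y‖ * g' * ‖ξ‖ ^ 2 := by field_simp
  linarith

theorem hasDerivAt_mul_one_sub_div_pow (c τ : ℝ) (n : ℕ) {t : ℝ} (ht : t ≠ 0) :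
    HasDerivAt (fun s => c * (1 - (τ / s) ^ n)) (c * n * (τ / t) ^ n / t) t := by
  have h := ((((hasDerivAt_inv ht).const_mul τ).fun_pow n).const_sub 1).const_mul c
  simp only [← div_eq_mul_inv] at h
  refine h.congr_deriv ?_
  rcases n with _ | n
  · simp
  · simp only [Nat.cast_add, Nat.cast_one, add_tsub_cancel_right, pow_succ]
    field_simp

theorem inner_fderiv_one_sub_div_pow_smul_le {τ : ℝ} (hτ : 0 ≤ τ) (n : ℕ) {y : F} (hy : y ≠ 0)
    (ξ : F) :
    ⟪fderiv ℝ (fun v => (1 / ((n : ℝ) + 1) * (1 - (τ / ‖v‖) ^ (n + 1))) • v) y ξ, ξ⟫ ≤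
      (1 + n * (τ / ‖y‖) ^ (n + 1)) / (n + 1) * ‖ξ‖ ^ 2 := by
  have hy' : 0 < ‖y‖ := norm_pos_iff.2 hy
  refine (inner_fderiv_smul_norm_self_le hy
    (hasDerivAt_mul_one_sub_div_pow _ τ (n + 1) hy'.ne') (by positivity) ξ).trans_eq ?_
  congr 1
  field_simp
  push_cast
  ring

end Radial

theorem ContinuousLinearMap.apply_fderiv_of_semiconj {E F : Type*} [NormedAddCommGroup E]
    [NormedSpace ℝ E] [NormedAddCommGroup F] [NormedSpace ℝ F] (L : E →L[ℝ] F) {f : E → E}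
    {g : F → F} (h : Function.Semiconj L f g) {x : E} (hf : DifferentiableAt ℝ f x)
    (hg : DifferentiableAt ℝ g (L x)) (v : E) :
    L (fderiv ℝ f x v) = fderiv ℝ g (L x) (L v) := by
  have hcomp := congrArg (fun f => fderiv ℝ f x v) (funext h : L ∘ f = g ∘ L)
  simpa only [fderiv_comp x L.differentiableAt hf, fderiv_comp x hg L.differentiableAt,
    L.fderiv, ContinuousLinearMap.comp_apply] using hcomp

noncomputable def EuclideanSpace.restrictL {ι κ : Type*} [Fintype ι] [Fintype κ] (f : κ → ι) :
    EuclideanSpace ℝ ι →L[ℝ] EuclideanSpace ℝ κ :=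
  LinearMap.toContinuousLinearMap
    { toFun := fun x => WithLp.toLp 2 (fun a => x (f a))
      map_add' := fun _ _ => rfl
      map_smul' := fun _ _ => rfl }

section Blocks

variable {m : ℕ} {k : Fin m → ℕ} {d : ℕ}

local notation "E" => EuclideanSpace ℝ ((Σ i : Fin m, Fin (k i + 1)) ⊕ Fin d)

variable (m k d) in
noncomputable def blockOfL (i : Fin m) : E →L[ℝ] EuclideanSpace ℝ (Fin (k i + 1)) :=
  EuclideanSpace.restrictL fun a => Sum.inl ⟨i, a⟩

variable (m k d) in
noncomputable def tailL : E →L[ℝ] EuclideanSpace ℝ (Fin d) :=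
  EuclideanSpace.restrictL Sum.inr

theorem inner_eq_sum_inner_blockOf_add (u v : E) :
    ⟪u, v⟫ = ∑ i, ⟪blockOf u i, blockOf v i⟫ + ⟪tailL m k d u, tailL m k d v⟫ := by
  simp only [PiLp.inner_apply, Fintype.sum_sum_type, Fintype.sum_sigma]
  rfl

theorem norm_sq_eq_sum_norm_sq_blockOf_add (u : E) :
    ‖u‖ ^ 2 = ∑ i, ‖blockOf u i‖ ^ 2 + ‖tailL m k d u‖ ^ 2 := by
  simp only [← real_inner_self_eq_norm_sq, inner_eq_sum_inner_blockOf_add]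

theorem blockOf_chiField (τ : Fin m → ℝ) (x : E) (i : Fin m) :
    blockOf (chiField τ x) i =
      (1 / ((k i : ℝ) + 1) * (1 - (τ i / ‖blockOf x i‖) ^ (k i + 1))) • blockOf x i := rfl

theorem tailL_chiField (τ : Fin m → ℝ) (x : E) : tailL m k d (chiField τ x) = tailL m k d x :=
  rfl

theorem differentiableAt_chiField (τ : Fin m → ℝ) {x : E} (hx : ∀ i, blockOf x i ≠ 0) :
    DifferentiableAt ℝ (chiField τ) x := by
  rw [differentiableAt_piLp]
  rintro (⟨i, a⟩ | j)
  · exact (PiLp.hasFDerivAt_apply 2 _ a).differentiableAt.comp x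
      ((hasFDerivAt_smul_norm_self (hx i) (hasDerivAt_mul_one_sub_div_pow _ _ _
        (norm_ne_zero_iff.2 (hx i)))).differentiableAt.comp x
        (blockOfL m k d i).differentiableAt)
  · exact (PiLp.hasFDerivAt_apply 2 _ (Sum.inr j)).differentiableAt

theorem inner_fderiv_chiField_le {τ : Fin m → ℝ} (hτ : ∀ i, 0 ≤ τ i) {x : E}
    (hx : ∀ i, blockOf x i ≠ 0) (ξ : E) :
    ⟪fderiv ℝ (chiField τ) x ξ, ξ⟫ ≤
      max (⨆ i, (1 + k i * (τ i / ‖blockOf x i‖) ^ (k i + 1)) / (k i + 1)) 1 * ‖ξ‖ ^ 2 := by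
  set M := max (⨆ i, (1 + k i * (τ i / ‖blockOf x i‖) ^ (k i + 1)) / (k i + 1)) 1
  have hχ := differentiableAt_chiField τ hx
  have hblock (i : Fin m) : blockOf (fderiv ℝ (chiField τ) x ξ) i =
      fderiv ℝ (fun v => (1 / ((k i : ℝ) + 1) * (1 - (τ i / ‖v‖) ^ (k i + 1))) • v)
        (blockOf x i) (blockOf ξ i) :=
    (blockOfL m k d i).apply_fderiv_of_semiconj (fun y => blockOf_chiField τ y i) hχ
      (hasFDerivAt_smul_norm_self (hx i)
        (hasDerivAt_mul_one_sub_div_pow _ _ _ (norm_ne_zero_iff.2 (hx i)))).differentiableAt ξ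
  have htail : tailL m k d (fderiv ℝ (chiField τ) x ξ) = tailL m k d ξ := by
    simpa using (tailL m k d).apply_fderiv_of_semiconj (g := id)
      (tailL_chiField τ) hχ differentiableAt_id ξ
  have hM (i : Fin m) : (1 + k i * (τ i / ‖blockOf x i‖) ^ (k i + 1)) / (k i + 1) ≤ M :=
    (le_ciSup (f := fun i => (1 + k i * (τ i / ‖blockOf x i‖) ^ (k i + 1)) / (k i + 1))
      (Set.finite_range _).bddAbove i).trans (le_max_left _ _)
  rw [inner_eq_sum_inner_blockOf_add, htail, real_inner_self_eq_norm_sq,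
    norm_sq_eq_sum_norm_sq_blockOf_add, mul_add, Finset.mul_sum]
  refine add_le_add (Finset.sum_le_sum fun i _ => ?_) ?_
  · rw [hblock]
    exact (inner_fderiv_one_sub_div_pow_smul_le (hτ i) (k i) (hx i) _).trans
      (mul_le_mul_of_nonneg_right (hM i) (sq_nonneg _))
  · exact le_mul_of_one_le_left (sq_nonneg _) (le_max_right _ _)

end Blocks

theorem stmt_10_general (m : ℕ) (k : Fin m → ℕ) (N : ℕ)
    (τ : Fin m → ℝ) (hτ : ∀ i, 0 < τ i)
    (φ : Fin m → ℝ → ℝ)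
    (hφ : ∀ i, ∀ t : ℝ, φ i t = (1 / ((k i : ℝ) + 1)) * (1 - (τ i / t) ^ (k i + 1)))
    (x ξ : EuclideanSpace ℝ ((Σ i : Fin m, Fin (k i + 1)) ⊕ Fin (N - (∑ i, k i) - m)))
    (hx : ∀ i, blockOf x i ≠ 0) :
    ⟪fderiv ℝ (chiField (d := N - (∑ i, k i) - m) τ) x ξ, ξ⟫ ≤
      max (⨆ i : Fin m, (1 - (k i : ℝ) * φ i ‖blockOf x i‖)) 1 * ‖ξ‖ ^ 2 := by
  have hφ' (i : Fin m) (t : ℝ) :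
      1 - (k i : ℝ) * φ i t = (1 + k i * (τ i / t) ^ (k i + 1)) / (k i + 1) := by
    rw [hφ]
    field_simp
    ring
  simpa only [hφ'] using inner_fderiv_chiField_le (fun i => (hτ i).le) hx ξ

/-- ⟨dχ(x)[ξ], ξ⟩ ≤ max{1 − k₁φ₁(|y¹|), …, 1 − k_mφ_m(|y^m|), 1}·|ξ|². -/
theorem stmt_10 (m : ℕ) (hm : 1 ≤ m) (k : Fin m → ℕ) (hk : ∀ i, 1 ≤ k i) (N : ℕ)
    (hN : (∑ i, k i) + m ≤ N) (τ : Fin m → ℝ) (hτ : ∀ i, 0 < τ i)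
    (φ : Fin m → ℝ → ℝ)
    (hφ : ∀ i, ∀ t : ℝ, φ i t = (1 / ((k i : ℝ) + 1)) * (1 - (τ i / t) ^ (k i + 1)))
    (x ξ : EuclideanSpace ℝ ((Σ i : Fin m, Fin (k i + 1)) ⊕ Fin (N - (∑ i, k i) - m)))
    (hx : ∀ i, blockOf x i ≠ 0) :
    ⟪fderiv ℝ (chiField (d := N - (∑ i, k i) - m) τ) x ξ, ξ⟫ ≤
      max (⨆ i : Fin m, (1 - (k i : ℝ) * φ i ‖blockOf x i‖)) 1 * ‖ξ‖ ^ 2 :=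
  stmt_10_general m k N τ hτ φ hφ x ξ hx
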